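/- Let $X$ and $Y$ be independent $\mathbb{R}^d$-valued random variables with laws having densities $\rho^X,\rho^Y\in L^1(\mathbb{R}^d)$. Suppose there exist constants $\kappa_1,\kappa_2>0$ and exponents $p_1,p_2\in(1,\infty)$ with conjugates $r_1,r_2$ such that $\sum_{z\in\mathbb{Z}^d}\|\mathbf{1}_{Q_z}\rho^X\|_{L^{r_1}}\le\kappa_1$ and $\sum_{z\in\mathbb{Z}^d}\|\mathbf{1}_{Q_z}\rho^Y\|_{L^{r_2}}\le\kappa_2$. Then for any nonnegative measurable $f:\mathbb{R}^d\times\mathbb{R}^d\to\mathbb{R}$, $$\mathbf{E} f(X,Y)\le\kappa_1\kappa_2\sup_{z,z'\in\mathbb{Z}^d}\Big(\int_{Q_{z'}}\|\mathbf{1}_{Q_z}f(\cdot,y)\|_{L^{p_1}}^{p_2}\,dy\Big)^{1/p_2}.$$ -/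

import Mathlib

open MeasureTheory ENNReal

/-! By independence, `𝔼 f(X, Y) = ∫ ρʸ(y) ∫ ρˣ(x) f(x, y) dx dy`. Splitting both integrals
along the unit cubes, the block over `Q_z × Q_{z'}` is bounded by Hölder's inequality in `x`
(exponents `p₁, r₁`) and then in `y` (exponents `p₂, r₂`) by
`‖ρˣ‖_{L^{r₁}(Q_z)} ‖ρʸ‖_{L^{r₂}(Q_{z'})}` times the mixed norm of `f` on the block; bounding
the mixed norm by its supremum over all blocks, the remaining double sum factors into `κ₁ κ₂`. -/

section Cubes

variable {ι : Type*}

def unitCube (z : ι → ℤ) : Set (ι → ℝ) :=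
  Set.univ.pi fun i => Set.Ioc (z i : ℝ) (z i + 1)

theorem measurableSet_unitCube [Countable ι] (z : ι → ℤ) : MeasurableSet (unitCube z) :=
  .univ_pi fun _ => measurableSet_Ioc

theorem pairwise_disjoint_unitCube : Pairwise (Function.onFun Disjoint (unitCube (ι := ι))) := by
  intro z z' hne
  obtain ⟨i, hi⟩ := Function.ne_iff.1 hne
  exact Set.disjoint_left.2 fun x hx hx' =>
    Set.disjoint_left.1 (Set.pairwise_disjoint_Ioc_intCast ℝ hi) (hx i trivial) (hx' i trivial)

theorem iUnion_unitCube : ⋃ z, unitCube (ι := ι) z = Set.univ := by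
  refine Set.eq_univ_of_forall fun x => ?_
  choose z hz using fun i => Set.mem_iUnion.1 (iUnion_Ioc_intCast (α := ℝ) ▸ Set.mem_univ (x i))
  exact Set.mem_iUnion.2 ⟨z, fun i _ => hz i⟩

end Cubes

section LocalizedHolder

variable {α β : Type*} [MeasurableSpace α] [MeasurableSpace β] {μ : Measure α} {ν : Measure β}

theorem eLpNorm_ofReal_eq_lintegral_rpow {p : ℝ} (hp : 0 < p) (f : α → ℝ≥0∞) :
    eLpNorm f (.ofReal p) μ = (∫⁻ a, f a ^ p ∂μ) ^ (1 / p) := by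
  rw [eLpNorm_eq_lintegral_rpow_enorm_toReal (by simpa using hp) ofReal_ne_top,
    toReal_ofReal hp.le]
  rfl

theorem lintegral_mul_le_eLpNorm_mul_eLpNorm {p q : ℝ} (hpq : p.HolderConjugate q)
    {f g : α → ℝ≥0∞} (hf : AEMeasurable f μ) (hg : AEMeasurable g μ) :
    ∫⁻ a, f a * g a ∂μ ≤ eLpNorm f (.ofReal p) μ * eLpNorm g (.ofReal q) μ := by
  rw [eLpNorm_ofReal_eq_lintegral_rpow hpq.pos, eLpNorm_ofReal_eq_lintegral_rpow hpq.symm.pos]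
  exact ENNReal.lintegral_mul_le_Lp_mul_Lq μ hpq hf hg

theorem lintegral_mul_lintegral_mul_le_mixed_eLpNorm [SFinite μ] {p₁ r₁ p₂ r₂ : ℝ}
    (h₁ : p₁.HolderConjugate r₁) (h₂ : p₂.HolderConjugate r₂) {F : α × β → ℝ≥0∞}
    (hF : Measurable F) {g : α → ℝ≥0∞} {h : β → ℝ≥0∞} (hg : AEMeasurable g μ)
    (hh : AEMeasurable h ν) :
    ∫⁻ y, h y * ∫⁻ x, g x * F (x, y) ∂μ ∂ν ≤
      eLpNorm g (.ofReal r₁) μ * eLpNorm h (.ofReal r₂) ν *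
        eLpNorm (fun y => eLpNorm (fun x => F (x, y)) (.ofReal p₁) μ) (.ofReal p₂) ν := by
  set A : β → ℝ≥0∞ := fun y => eLpNorm (fun x => F (x, y)) (.ofReal p₁) μ
  have hA : Measurable A := by
    simp only [A, eLpNorm_ofReal_eq_lintegral_rpow h₁.pos]
    exact (hF.pow_const p₁).lintegral_prod_left'.pow_const _
  have inner (y : β) : ∫⁻ x, g x * F (x, y) ∂μ ≤ A y * eLpNorm g (.ofReal r₁) μ := by
    simp_rw [mul_comm (g _)]
    exact lintegral_mul_le_eLpNorm_mul_eLpNorm h₁ (hF.comp measurable_prodMk_right).aemeasurable hg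
  calc ∫⁻ y, h y * ∫⁻ x, g x * F (x, y) ∂μ ∂ν
      ≤ ∫⁻ y, h y * (A y * eLpNorm g (.ofReal r₁) μ) ∂ν := by gcongr with y; exact inner y
    _ = ∫⁻ y, eLpNorm g (.ofReal r₁) μ * (A y * h y) ∂ν := by congr! 2 with y; ring
    _ = eLpNorm g (.ofReal r₁) μ * ∫⁻ y, A y * h y ∂ν :=
        lintegral_const_mul'' _ (hA.aemeasurable.mul hh)
    _ ≤ eLpNorm g (.ofReal r₁) μ * (eLpNorm A (.ofReal p₂) ν * eLpNorm h (.ofReal r₂) ν) :=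
        by gcongr; exact lintegral_mul_le_eLpNorm_mul_eLpNorm h₂ hA.aemeasurable hh
    _ = _ := by ring

theorem lintegral_eq_tsum_setLIntegral {ι : Type*} [Countable ι] {Q : ι → Set α}
    (hQm : ∀ i, MeasurableSet (Q i))
    (hQd : Pairwise (Function.onFun Disjoint Q)) (hQc : ⋃ i, Q i = Set.univ) (f : α → ℝ≥0∞) :
    ∫⁻ x, f x ∂μ = ∑' i, ∫⁻ x in Q i, f x ∂μ := by
  rw [← setLIntegral_univ, ← hQc, lintegral_iUnion hQm hQd]

theorem lintegral_mul_lintegral_mul_le_tsum_mul_tsum_mul_iSup {ι κ : Type*} [SFinite μ]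
    [SFinite ν] [Countable ι] [Countable κ] {A : ι → Set α} {B : κ → Set β}
    (hAm : ∀ i, MeasurableSet (A i)) (hAd : Pairwise (Function.onFun Disjoint A))
    (hAc : ⋃ i, A i = Set.univ) (hBm : ∀ j, MeasurableSet (B j))
    (hBd : Pairwise (Function.onFun Disjoint B)) (hBc : ⋃ j, B j = Set.univ) {p₁ r₁ p₂ r₂ : ℝ}
    (h₁ : p₁.HolderConjugate r₁) (h₂ : p₂.HolderConjugate r₂) {F : α × β → ℝ≥0∞}
    (hF : Measurable F) {g : α → ℝ≥0∞} {h : β → ℝ≥0∞} (hg : AEMeasurable g μ)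
    (hh : AEMeasurable h ν) :
    ∫⁻ y, h y * ∫⁻ x, g x * F (x, y) ∂μ ∂ν ≤
      (∑' i, eLpNorm g (.ofReal r₁) (μ.restrict (A i))) *
        (∑' j, eLpNorm h (.ofReal r₂) (ν.restrict (B j))) *
        ⨆ i, ⨆ j, eLpNorm (fun y => eLpNorm (fun x => F (x, y)) (.ofReal p₁) (μ.restrict (A i)))
          (.ofReal p₂) (ν.restrict (B j)) := by
  set S := ⨆ i, ⨆ j, eLpNorm (fun y => eLpNorm (fun x => F (x, y)) (.ofReal p₁)
    (μ.restrict (A i))) (.ofReal p₂) (ν.restrict (B j))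
  have hinner (i : ι) : AEMeasurable (fun y => ∫⁻ x in A i, g x * F (x, y) ∂μ) ν :=
    ((hg.restrict.comp_fst).mul hF.aemeasurable).lintegral_prod_left'
  calc ∫⁻ y, h y * ∫⁻ x, g x * F (x, y) ∂μ ∂ν
      = ∑' j, ∑' i, ∫⁻ y in B j, h y * ∫⁻ x in A i, g x * F (x, y) ∂μ ∂ν := by
        have hsplit (y : β) : h y * ∫⁻ x, g x * F (x, y) ∂μ =
            ∑' i, h y * ∫⁻ x in A i, g x * F (x, y) ∂μ := by
          rw [lintegral_eq_tsum_setLIntegral hAm hAd hAc, ENNReal.tsum_mul_left]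
        rw [lintegral_eq_tsum_setLIntegral hBm hBd hBc]
        simp_rw [hsplit]
        exact tsum_congr fun j => lintegral_tsum fun i => (hh.mul (hinner i)).restrict
    _ ≤ ∑' j, ∑' i, eLpNorm g (.ofReal r₁) (μ.restrict (A i)) *
          eLpNorm h (.ofReal r₂) (ν.restrict (B j)) * S := by
        gcongr with j i
        refine (lintegral_mul_lintegral_mul_le_mixed_eLpNorm h₁ h₂ hF hg.restrict
          hh.restrict).trans ?_
        gcongr
        exact le_iSup₂ (f := fun i j => eLpNorm (fun y => eLpNorm (fun x => F (x, y))
          (.ofReal p₁) (μ.restrict (A i))) (.ofReal p₂) (ν.restrict (B j))) i j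
    _ = _ := by simp_rw [ENNReal.tsum_mul_right, ENNReal.tsum_mul_left]

theorem lintegral_comp_prodMk_eq_lintegral_mul_lintegral_mul {Ω : Type*} [MeasurableSpace Ω]
    [SFinite μ] [SFinite ν] {P : Measure Ω} {X : Ω → α} {Y : Ω → β} (hX : Measurable X)
    (hY : Measurable Y) {g : α → ℝ≥0∞} {h : β → ℝ≥0∞} (hg : AEMeasurable g μ)
    (hh : AEMeasurable h ν)
    (hXY : P.map (fun ω => (X ω, Y ω)) = (μ.withDensity g).prod (ν.withDensity h))
    {F : α × β → ℝ≥0∞} (hF : Measurable F) :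
    ∫⁻ ω, F (X ω, Y ω) ∂P = ∫⁻ y, h y * ∫⁻ x, g x * F (x, y) ∂μ ∂ν := by
  rw [← lintegral_map hF (hX.prodMk hY), hXY, lintegral_prod_symm' _ hF,
    lintegral_withDensity_eq_lintegral_mul₀ hh hF.lintegral_prod_left'.aemeasurable]
  exact lintegral_congr fun y => congrArg (h y * ·) <|
    lintegral_withDensity_eq_lintegral_mul₀ hg (hF.comp measurable_prodMk_right).aemeasurable

end LocalizedHolder

theorem stmt_2_general {d : ℕ} {Ω : Type*} [MeasurableSpace Ω] (P : Measure Ω)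
    (X Y : Ω → (Fin d → ℝ)) (hX : Measurable X) (hY : Measurable Y)
    (ρX ρY : (Fin d → ℝ) → ℝ) (hρX : Integrable ρX) (hρY : Integrable ρY)
    (hlawX : P.map X = volume.withDensity fun x => ENNReal.ofReal (ρX x))
    (hlawY : P.map Y = volume.withDensity fun x => ENNReal.ofReal (ρY x))
    (hindep : P.map (fun ω => (X ω, Y ω)) = (P.map X).prod (P.map Y))
    (p₁ p₂ : ℝ) (hp₁ : 1 < p₁) (hp₂ : 1 < p₂)
    (r₁ r₂ : ℝ) (hr₁ : r₁ = p₁ / (p₁ - 1)) (hr₂ : r₂ = p₂ / (p₂ - 1))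
    (κ₁ κ₂ : ℝ)
    (Q : (Fin d → ℤ) → Set (Fin d → ℝ))
    (hQ : ∀ z, Q z = {x | ∀ i, (z i : ℝ) < x i ∧ x i ≤ (z i : ℝ) + 1})
    (hX_loc : ∑' z, eLpNorm ρX (ENNReal.ofReal r₁) (volume.restrict (Q z)) ≤ ENNReal.ofReal κ₁)
    (hY_loc : ∑' z, eLpNorm ρY (ENNReal.ofReal r₂) (volume.restrict (Q z)) ≤ ENNReal.ofReal κ₂)
    (f : (Fin d → ℝ) × (Fin d → ℝ) → ℝ)
    (hf_meas : Measurable f) :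
    ∫⁻ ω, ENNReal.ofReal (f (X ω, Y ω)) ∂P ≤
      ENNReal.ofReal κ₁ * ENNReal.ofReal κ₂ *
        ⨆ z, ⨆ z', (∫⁻ y in Q z',
          (eLpNorm (fun x => f (x, y)) (ENNReal.ofReal p₁) (volume.restrict (Q z))) ^ p₂) ^ (1 / p₂) := by
  have h₁ : p₁.HolderConjugate r₁ := (Real.holderConjugate_iff_eq_conjExponent hp₁).2 hr₁
  have h₂ : p₂.HolderConjugate r₂ := (Real.holderConjugate_iff_eq_conjExponent hp₂).2 hr₂
  obtain rfl : Q = unitCube := funext fun z => (hQ z).trans (by ext; simp [unitCube])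
  rw [hlawX, hlawY] at hindep
  have hofReal {ρ : (Fin d → ℝ) → ℝ} {μ : Measure (Fin d → ℝ)} {p : ℝ≥0∞} :
      eLpNorm (fun x => ENNReal.ofReal (ρ x)) p μ ≤ eLpNorm ρ p μ :=
    eLpNorm_mono_enorm fun x => Real.ofReal_le_enorm (ρ x)
  rw [lintegral_comp_prodMk_eq_lintegral_mul_lintegral_mul hX hY
    hρX.1.aemeasurable.ennreal_ofReal hρY.1.aemeasurable.ennreal_ofReal hindep
    (F := fun p => ENNReal.ofReal (f p)) (ENNReal.measurable_ofReal.comp hf_meas)]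
  refine (lintegral_mul_lintegral_mul_le_tsum_mul_tsum_mul_iSup measurableSet_unitCube
    pairwise_disjoint_unitCube iUnion_unitCube measurableSet_unitCube pairwise_disjoint_unitCube
    iUnion_unitCube h₁ h₂ (ENNReal.measurable_ofReal.comp hf_meas)
    hρX.1.aemeasurable.ennreal_ofReal hρY.1.aemeasurable.ennreal_ofReal).trans ?_
  gcongr with z z'
  · exact (ENNReal.tsum_le_tsum fun z => hofReal).trans hX_loc
  · exact (ENNReal.tsum_le_tsum fun z => hofReal).trans hY_loc
  · rw [eLpNorm_ofReal_eq_lintegral_rpow h₂.pos]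
    gcongr with y
    exact hofReal

/-- Mixed Krylov-type duality estimate for independent random variables with
densities having summable localized dual norms. -/
theorem stmt_2 {d : ℕ} {Ω : Type*} [MeasurableSpace Ω] (P : Measure Ω)
    [IsProbabilityMeasure P]
    (X Y : Ω → (Fin d → ℝ)) (hX : Measurable X) (hY : Measurable Y)
    (ρX ρY : (Fin d → ℝ) → ℝ) (hρX : Integrable ρX) (hρY : Integrable ρY)
    (hlawX : P.map X = volume.withDensity fun x => ENNReal.ofReal (ρX x))
    (hlawY : P.map Y = volume.withDensity fun x => ENNReal.ofReal (ρY x))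
    (hindep : P.map (fun ω => (X ω, Y ω)) = (P.map X).prod (P.map Y))
    (p₁ p₂ : ℝ) (hp₁ : 1 < p₁) (hp₂ : 1 < p₂)
    (r₁ r₂ : ℝ) (hr₁ : r₁ = p₁ / (p₁ - 1)) (hr₂ : r₂ = p₂ / (p₂ - 1))
    (κ₁ κ₂ : ℝ) (hκ₁ : 0 < κ₁) (hκ₂ : 0 < κ₂)
    (Q : (Fin d → ℤ) → Set (Fin d → ℝ))
    (hQ : ∀ z, Q z = {x | ∀ i, (z i : ℝ) < x i ∧ x i ≤ (z i : ℝ) + 1})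
    (hX_loc : ∑' z, eLpNorm ρX (ENNReal.ofReal r₁) (volume.restrict (Q z)) ≤ ENNReal.ofReal κ₁)
    (hY_loc : ∑' z, eLpNorm ρY (ENNReal.ofReal r₂) (volume.restrict (Q z)) ≤ ENNReal.ofReal κ₂)
    (f : (Fin d → ℝ) × (Fin d → ℝ) → ℝ) (hf_nonneg : ∀ x, 0 ≤ f x)
    (hf_meas : Measurable f) :
    ∫⁻ ω, ENNReal.ofReal (f (X ω, Y ω)) ∂P ≤
      ENNReal.ofReal κ₁ * ENNReal.ofReal κ₂ *
        ⨆ z, ⨆ z', (∫⁻ y in Q z',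
          (eLpNorm (fun x => f (x, y)) (ENNReal.ofReal p₁) (volume.restrict (Q z))) ^ p₂) ^ (1 / p₂) :=
  stmt_2_general P X Y hX hY ρX ρY hρX hρY hlawX hlawY hindep p₁ p₂ hp₁ hp₂ r₁ r₂ hr₁ hr₂ κ₁ κ₂ Q hQ
    hX_loc hY_loc f hf_meas
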